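/- arXiv:2305.18272 — 6 statements merged into one kernel-verified Lean document; each statement's English description precedes it below -/
import Mathlib

section
/- Let E = (E_n)_{n≥1} be a spread in Ω with |E_n| = n+1, and for x ⊆ Ω define λ(x) = 0 if x meets no E_n or infinitely many E_n, λ(x) = 0 if there is a largest n with E_n ∩ x ≠ ∅ and E_n ⊆ x, and λ(x) = |x ∩ E_n| if there is a largest n with E_n ∩ x ≠ ∅ and E_n ⊈ x. Then λ is subadditive on P(Ω): λ(x ∪ y) ≤ λ(x) + λ(y) for all x, y ⊆ Ω. -/
/-- A spread: pairwise disjoint finite nonempty sets with cardinality tending to ∞. -/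
def IsSpread {Ω : Type*} (E : ℕ → Set Ω) : Prop :=
  (∀ n, (E n).Finite) ∧ (∀ n, (E n).Nonempty) ∧
  (∀ m n, m ≠ n → Disjoint (E m) (E n)) ∧
  (∀ k : ℕ, ∃ N : ℕ, ∀ n ≥ N, k ≤ (E n).ncard)

/-- The `T_max`-type weight built from a spread with `|E_n| = n + 2` is subadditive. -/
theorem tmax_weight_subadditive {Ω : Type*} (E : ℕ → Set Ω)
    (hE : IsSpread E) (hcard : ∀ n, (E n).ncard = n + 2)
    (lam : Set Ω → ℝ)
    (h0 : ∀ x : Set Ω,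
      ((∀ n, x ∩ E n = ∅) ∨ {n : ℕ | (x ∩ E n).Nonempty}.Infinite) → lam x = 0)
    (h1 : ∀ (x : Set Ω) (n : ℕ), (x ∩ E n).Nonempty → E n ⊆ x →
      (∀ k > n, x ∩ E k = ∅) → lam x = 0)
    (h2 : ∀ (x : Set Ω) (n : ℕ), (x ∩ E n).Nonempty → ¬ E n ⊆ x →
      (∀ k > n, x ∩ E k = ∅) → lam x = (x ∩ E n).ncard) :
    ∀ x y : Set Ω, lam (x ∪ y) ≤ lam x + lam y := by
  have key : ∀ x : Set Ω, lam x = 0 ∨ ∃ n, (x ∩ E n).Nonempty ∧ ¬ E n ⊆ x ∧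
      (∀ k > n, x ∩ E k = ∅) ∧ lam x = (x ∩ E n).ncard := by
    intro x
    by_cases hS : {n | (x ∩ E n).Nonempty}.Infinite
    · exact Or.inl (h0 x (Or.inr hS))
    rw [Set.not_infinite] at hS
    by_cases hne : {n | (x ∩ E n).Nonempty}.Nonempty
    · obtain ⟨n, hn, hmax⟩ : ∃ n ∈ {n | (x ∩ E n).Nonempty},
          ∀ k ∈ {n | (x ∩ E n).Nonempty}, k ≤ n := by
        refine ⟨hS.toFinset.max' (by simpa using hne), ?_, fun k hk => ?_⟩
        · simpa using hS.toFinset.max'_mem (by simpa using hne)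
        · exact hS.toFinset.le_max' k (by simpa using hk)
      have htop : ∀ k > n, x ∩ E k = ∅ := by
        intro k hk
        by_contra h
        exact absurd (hmax k (Set.nonempty_iff_ne_empty.mpr h)) (not_le.mpr hk)
      by_cases hsub : E n ⊆ x
      · exact Or.inl (h1 x n hn hsub htop)
      · exact Or.inr ⟨n, hn, hsub, htop, h2 x n hn hsub htop⟩
    · refine Or.inl (h0 x (Or.inl fun n => ?_))
      rw [Set.not_nonempty_iff_eq_empty] at hne
      by_contra h
      exact absurd (Set.eq_empty_iff_forall_notMem.mp hne n)
        (by simpa using Set.nonempty_iff_ne_empty.mpr h)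
  have nonneg : ∀ x, 0 ≤ lam x := by
    intro x
    rcases key x with h | ⟨n, _, _, _, h⟩ <;> rw [h] <;> positivity
  intro x y
  rcases key (x ∪ y) with h | ⟨n, hne, hnsub, htop, heq⟩
  · rw [h]; exact add_nonneg (nonneg x) (nonneg y)
  rw [heq]
  have hsplit : (x ∪ y) ∩ E n = (x ∩ E n) ∪ (y ∩ E n) := Set.union_inter_distrib_right x y (E n)
  have hfinx : (x ∩ E n).Finite := (hE.1 n).subset Set.inter_subset_right
  have hfiny : (y ∩ E n).Finite := (hE.1 n).subset Set.inter_subset_right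
  have htopx : ∀ k > n, x ∩ E k = ∅ := fun k hk =>
    Set.subset_empty_iff.mp ((htop k hk) ▸ Set.inter_subset_inter_left _ Set.subset_union_left)
  have htopy : ∀ k > n, y ∩ E k = ∅ := fun k hk =>
    Set.subset_empty_iff.mp ((htop k hk) ▸ Set.inter_subset_inter_left _ Set.subset_union_right)
  have hxsub : ¬ E n ⊆ x := fun h => hnsub (h.trans Set.subset_union_left)
  have hysub : ¬ E n ⊆ y := fun h => hnsub (h.trans Set.subset_union_right)
  by_cases hx : (x ∩ E n).Nonempty
  · by_cases hy : (y ∩ E n).Nonempty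
    · rw [h2 x n hx hxsub htopx, h2 y n hy hysub htopy, hsplit]
      exact_mod_cast Set.ncard_union_le (x ∩ E n) (y ∩ E n)
    · rw [Set.not_nonempty_iff_eq_empty] at hy
      rw [h2 x n hx hxsub htopx, hsplit, hy, Set.union_empty]
      linarith [nonneg y]
  · rw [Set.not_nonempty_iff_eq_empty] at hx
    have hy : (y ∩ E n).Nonempty := by
      rcases (hsplit ▸ hne) with ⟨a, ha⟩
      rcases ha with ha | ha
      · exact absurd ha (hx ▸ Set.notMem_empty a)
      · exact ⟨a, ha⟩
    rw [h2 y n hy hysub htopy, hsplit, hx, Set.empty_union]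
    linarith [nonneg x]
end

section
/- Let E = (E_n)_{n≥1} be a spread in Ω, and for x ⊆ Ω define λ(x) = 0 if x ∩ ⋃_n E_n = ∅; λ(x) = 0 if for the smallest n with E_n ∩ x ≠ ∅ we have E_n ⊆ x; and λ(x) = |x ∩ E_n| if for the smallest such n we have E_n ⊈ x. Then λ(x ∪ y) ≤ λ(x) + λ(y) for all x, y ⊆ Ω. -/
/-- The `T_min`-type weight built from a spread is subadditive. -/
theorem tmin_weight_subadditive {Ω : Type*} (E : ℕ → Set Ω)
    (hE : IsSpread E)
    (lam : Set Ω → ℝ)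
    (h0 : ∀ x : Set Ω, x ∩ (⋃ n, E n) = ∅ → lam x = 0)
    (h1 : ∀ (x : Set Ω) (n : ℕ), (x ∩ E n).Nonempty →
      (∀ k < n, x ∩ E k = ∅) → E n ⊆ x → lam x = 0)
    (h2 : ∀ (x : Set Ω) (n : ℕ), (x ∩ E n).Nonempty →
      (∀ k < n, x ∩ E k = ∅) → ¬ E n ⊆ x → lam x = (x ∩ E n).ncard) :
    ∀ x y : Set Ω, lam (x ∪ y) ≤ lam x + lam y := by
  classical
  have key : ∀ x : Set Ω, lam x = 0 ∨ ∃ n, (x ∩ E n).Nonempty ∧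
      (∀ k < n, x ∩ E k = ∅) ∧ ¬ E n ⊆ x ∧ lam x = (x ∩ E n).ncard := by
    intro x
    by_cases hx : x ∩ (⋃ n, E n) = ∅
    · exact Or.inl (h0 x hx)
    · have hne : ∃ n, (x ∩ E n).Nonempty := by
        obtain ⟨a, ha⟩ := Set.nonempty_iff_ne_empty.2 hx
        obtain ⟨n, han⟩ := Set.mem_iUnion.1 ha.2
        exact ⟨n, a, ha.1, han⟩
      set n := Nat.find hne with hn
      have hmem : (x ∩ E n).Nonempty := Nat.find_spec hne
      have hmin : ∀ k < n, x ∩ E k = ∅ := fun k hk =>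
        Set.not_nonempty_iff_eq_empty.1 (Nat.find_min hne hk)
      by_cases hsub : E n ⊆ x
      · exact Or.inl (h1 x n hmem hmin hsub)
      · exact Or.inr ⟨n, hmem, hmin, hsub, h2 x n hmem hmin hsub⟩
  have nonneg : ∀ x : Set Ω, 0 ≤ lam x := by
    intro x
    rcases key x with h | ⟨n, _, _, _, h⟩
    · rw [h]
    · rw [h]; positivity
  intro x y
  rcases key (x ∪ y) with h | ⟨n, hne, hmin, hnsub, heq⟩
  · rw [h]; exact add_nonneg (nonneg x) (nonneg y)
  · rw [heq]
    have bound : ∀ z : Set Ω, z ⊆ x ∪ y → ((z ∩ E n).ncard : ℝ) ≤ lam z := by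
      intro z hz
      by_cases hzn : (z ∩ E n).Nonempty
      · have hzmin : ∀ k < n, z ∩ E k = ∅ := fun k hk =>
          Set.eq_empty_of_subset_empty ((hmin k hk) ▸
            Set.inter_subset_inter_left _ hz)
        have hzsub : ¬ E n ⊆ z := fun h => hnsub (h.trans hz)
        rw [h2 z n hzn hzmin hzsub]
      · rw [Set.not_nonempty_iff_eq_empty.1 hzn]
        simpa using nonneg z
    have hx := bound x Set.subset_union_left
    have hy := bound y Set.subset_union_right
    have hcard : ((x ∪ y) ∩ E n).ncard ≤ (x ∩ E n).ncard + (y ∩ E n).ncard := by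
      rw [Set.union_inter_distrib_right]
      exact Set.ncard_union_le _ _
    calc (((x ∪ y) ∩ E n).ncard : ℝ) ≤ ((x ∩ E n).ncard : ℝ) + ((y ∩ E n).ncard : ℝ) := by
          exact_mod_cast hcard
      _ ≤ lam x + lam y := add_le_add hx hy
end

section
/- Let S ⊆ P(Ω) be union-closed, E = (E_n) a spread in Ω, C a finite colouring of E (a finite partition of Ω each of whose classes C satisfies |C ∩ E_n| → ∞) which is S-decisive with decisive colour class C_0. For x ∈ S set T(x) = { n : |x ∩ C ∩ E_n| ≤ ½|C ∩ E_n| for all colour classes C }, and λ(x) = sup_{n ∈ T(x)} |x ∩ C_0 ∩ E_n|. Then λ(x) < ∞ for every x ∈ S, and λ(x ∪ y) ≤ λ(x) + λ(y) for all x, y ∈ S, i.e. λ is a log-weight on S. -/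
/-- `C` is a colouring of the spread `E`: a finite partition of `Ω` each of whose
classes meets `E n` in a set of cardinality tending to infinity. -/
def IsColouring {Ω : Type*} (C : Finset (Set Ω)) (E : ℕ → Set Ω) : Prop :=
  (⋃₀ (C : Set (Set Ω)) = Set.univ) ∧
  (∀ D₁ ∈ C, ∀ D₂ ∈ C, D₁ ≠ D₂ → Disjoint D₁ D₂) ∧
  (∀ D ∈ C, ∀ k : ℕ, ∃ N : ℕ, ∀ n ≥ N, k ≤ (D ∩ E n).ncard)

/-- `C₀ ∈ C` is a decisive colour class for `S` with respect to the spread `E`. -/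
def IsDecisiveClass {Ω : Type*} (S : Set (Set Ω)) (C : Finset (Set Ω))
    (C₀ : Set Ω) (E : ℕ → Set Ω) : Prop :=
  C₀ ∈ C ∧ ∀ x ∈ S, ∃ B : ℕ, ∀ n : ℕ,
    (x ∩ C₀ ∩ E n).ncard ≤ B ∨ ∃ D ∈ C, (xᶜ ∩ D ∩ E n).ncard ≤ B

/-- Lemma 5.1: the weight built from a decisive colouring is finite and
subadditive, i.e. a log-weight on `S`. -/
theorem decisive_colouring_weight {Ω : Type*} (S : Set (Set Ω))
    (hUC : ∀ a ∈ S, ∀ b ∈ S, a ∪ b ∈ S)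
    (E : ℕ → Set Ω) (hE : IsSpread E)
    (C : Finset (Set Ω)) (hC : IsColouring C E)
    (C₀ : Set Ω) (hdec : IsDecisiveClass S C C₀ E)
    (T : Set Ω → Set ℕ)
    (hT : ∀ x, T x = {n : ℕ | ∀ D ∈ C, 2 * (x ∩ D ∩ E n).ncard ≤ (D ∩ E n).ncard})
    (lam : Set Ω → ℕ∞)
    (hlam : ∀ x, lam x = ⨆ n ∈ T x, ((x ∩ C₀ ∩ E n).ncard : ℕ∞)) :
    (∀ x ∈ S, lam x < ⊤) ∧
    (∀ x ∈ S, ∀ y ∈ S, lam (x ∪ y) ≤ lam x + lam y) := by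
  constructor
  · intro x hx
    obtain ⟨hC₀, hdec2⟩ := hdec
    obtain ⟨B, hB⟩ := hdec2 x hx
    have key : ∀ D ∈ C, ∃ N : ℕ, ∀ n ≥ N, 2 * B + 2 ≤ (D ∩ E n).ncard :=
      fun D hD => hC.2.2 D hD (2 * B + 2)
    choose f hf using key
    set N := C.attach.sup (fun D => f D.1 D.2) with hN
    set M := max B ((Finset.range N).sup (fun n => (E n).ncard)) with hM
    have hbound : ∀ n ∈ T x, (x ∩ C₀ ∩ E n).ncard ≤ M := by
      intro n hn
      rw [hT] at hn
      simp only [Set.mem_setOf_eq] at hn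
      by_cases hnN : n < N
      · refine le_trans ?_ (le_max_right _ _)
        refine le_trans (Set.ncard_le_ncard ?_ (hE.1 n)) ?_
        · intro a ha; exact ha.2
        · exact Finset.le_sup (f := fun n => (E n).ncard) (Finset.mem_range.mpr hnN)
      · push_neg at hnN
        refine le_trans ?_ (le_max_left _ _)
        rcases hB n with h | ⟨D, hD, hDb⟩
        · exact h
        · exfalso
          have hfin1 : (x ∩ D ∩ E n).Finite := (hE.1 n).subset fun a ha => ha.2
          have hfin2 : (xᶜ ∩ D ∩ E n).Finite := (hE.1 n).subset fun a ha => ha.2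
          have hdisj : Disjoint (x ∩ D ∩ E n) (xᶜ ∩ D ∩ E n) := by
            rw [Set.disjoint_left]
            intro a ha ha'
            exact ha'.1.1 ha.1.1
          have hun : (x ∩ D ∩ E n) ∪ (xᶜ ∩ D ∩ E n) = D ∩ E n := by
            ext a
            by_cases hax : a ∈ x <;> simp [hax] <;> tauto
          have h1 : (x ∩ D ∩ E n).ncard + (xᶜ ∩ D ∩ E n).ncard = (D ∩ E n).ncard := by
            rw [← Set.ncard_union_eq hdisj hfin1 hfin2, hun]
          have h2 := hn D hD
          have h3 : 2 * B + 2 ≤ (D ∩ E n).ncard := by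
            refine hf D hD n (le_trans ?_ hnN)
            exact Finset.le_sup (f := fun D : {D // D ∈ C} => f D.1 D.2) (Finset.mem_attach C ⟨D, hD⟩)
          omega
    rw [hlam]
    refine lt_of_le_of_lt (iSup₂_le fun n hn => ?_) (?_ : (M : ℕ∞) < ⊤)
    · exact_mod_cast hbound n hn
    · exact ENat.coe_lt_top M
  · intro x hx y hy
    rw [hlam (x ∪ y), hlam x, hlam y]
    refine iSup₂_le fun n hn => ?_
    have hn' := hn
    rw [hT] at hn'
    simp only [Set.mem_setOf_eq] at hn'
    have hmono : ∀ z : Set Ω, z ⊆ x ∪ y → n ∈ T z := by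
      intro z hz
      rw [hT]
      intro D hD
      refine le_trans ?_ (hn' D hD)
      refine Nat.mul_le_mul_left 2 (Set.ncard_le_ncard ?_ ((hE.1 n).subset fun a ha => ha.2))
      exact fun a ha => ⟨⟨hz ha.1.1, ha.1.2⟩, ha.2⟩
    have hnx : n ∈ T x := hmono x Set.subset_union_left
    have hny : n ∈ T y := hmono y Set.subset_union_right
    have hfinx : (x ∩ C₀ ∩ E n).Finite := (hE.1 n).subset fun a ha => ha.2
    have hfiny : (y ∩ C₀ ∩ E n).Finite := (hE.1 n).subset fun a ha => ha.2
    have hsplit : ((x ∪ y) ∩ C₀ ∩ E n).ncard ≤ (x ∩ C₀ ∩ E n).ncard + (y ∩ C₀ ∩ E n).ncard := by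
      have heq : (x ∪ y) ∩ C₀ ∩ E n = (x ∩ C₀ ∩ E n) ∪ (y ∩ C₀ ∩ E n) := by
        ext a; simp only [Set.mem_inter_iff, Set.mem_union]; tauto
      rw [heq]
      exact Set.ncard_union_le _ _
    calc (((x ∪ y) ∩ C₀ ∩ E n).ncard : ℕ∞)
        ≤ ((x ∩ C₀ ∩ E n).ncard : ℕ∞) + ((y ∩ C₀ ∩ E n).ncard : ℕ∞) := by
          exact_mod_cast hsplit
      _ ≤ _ := add_le_add
          (le_iSup₂ (f := fun n (_ : n ∈ T x) => ((x ∩ C₀ ∩ E n).ncard : ℕ∞)) n hnx)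
          (le_iSup₂ (f := fun n (_ : n ∈ T y) => ((y ∩ C₀ ∩ E n).ncard : ℕ∞)) n hny)
end

section
/- (Dichotomy Lemma) Let S ⊆ P(Ω) be a union-closed set system, E = (E_n)_{n≥1} a spread in Ω, and C a colouring of E. Then at least one of the following holds: (i) there exists an infinite set N ⊆ ℕ and some y ∈ S which halves every colour class C ∈ C with respect to (E_n)_{n∈N}, i.e., |C ∩ y ∩ E_n| → ∞ and |(C \ y) ∩ E_n| → ∞ along n ∈ N for each C; or (ii) there is a spread F refining E such that C is an S-decisive colouring of F. -/
/-- `F` is a refinement of the spread `E`. -/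
def Refines {Ω : Type*} (F E : ℕ → Set Ω) : Prop :=
  IsSpread F ∧ ∃ g : ℕ → ℕ, Function.Injective g ∧ ∀ j, F j ⊆ E (g j)

section Aux

variable {Ω : Type*}

lemma spread_refine (E : ℕ → Set Ω) (hE : IsSpread E) (C : Finset (Set Ω))
    (hCne : C.Nonempty) (g : ℕ → ℕ) (hg : StrictMono g) (G : ℕ → Set Ω)
    (hGsub : ∀ j, G j ⊆ E (g j))
    (hGcol : ∀ D ∈ C, ∀ j : ℕ, j + 1 ≤ (D ∩ G j).ncard) :
    IsSpread G := by
  obtain ⟨D, hD⟩ := hCne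
  have hfin : ∀ j, (G j).Finite := fun j => (hE.1 (g j)).subset (hGsub j)
  refine ⟨hfin, ?_, ?_, ?_⟩
  · intro j
    have h1 : 0 < (D ∩ G j).ncard := lt_of_lt_of_le (Nat.succ_pos j) (hGcol D hD j)
    have h2 : (D ∩ G j).Nonempty := by
      rw [← Set.ncard_pos ((hfin j).inter_of_right D)]
      exact h1
    exact h2.mono Set.inter_subset_right
  · intro a b hab
    exact ((hE.2.2.1 (g a) (g b) (fun h => hab (hg.injective h))).mono (hGsub a) (hGsub b))
  · intro k
    refine ⟨k, fun n hn => ?_⟩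
    calc k ≤ n + 1 := by omega
      _ ≤ (D ∩ G n).ncard := hGcol D hD n
      _ ≤ (G n).ncard := Set.ncard_le_ncard Set.inter_subset_right (hfin n)

lemma dichotomy_aux (S : Set (Set Ω)) (hUC : ∀ a ∈ S, ∀ b ∈ S, a ∪ b ∈ S)
    (E : ℕ → Set Ω) (hE : IsSpread E) (C : Finset (Set Ω)) (hC : IsColouring C E)
    (hCne : C.Nonempty)
    (hkey : ∀ F : ℕ → Set Ω, Refines F E → IsColouring C F → ∀ C₀ ∈ C,
      ∃ x ∈ S, ∀ B : ℕ, ∃ n, B < (x ∩ C₀ ∩ F n).ncard ∧ ∀ D ∈ C, B < (xᶜ ∩ D ∩ F n).ncard) :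
    ∀ T : Finset (Set Ω), T ⊆ C →
      ∀ g : ℕ → ℕ, StrictMono g → ∀ G : ℕ → Set Ω, (∀ j, G j ⊆ E (g j)) →
      (∀ D ∈ C, ∀ j : ℕ, j + 1 ≤ (D ∩ G j).ncard) →
      ∀ v : Set Ω, (v ∈ S ∨ (v = ∅ ∧ T = C)) →
      (∀ D ∈ C, D ∉ T → ∀ j : ℕ, j ≤ (v ∩ D ∩ E (g j)).ncard) →
      (∀ j, Disjoint v (G j)) →
      ∃ N : Set ℕ, N.Infinite ∧ ∃ y ∈ S, ∀ D ∈ C,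
        (∀ k : ℕ, ∃ M : ℕ, ∀ n ∈ N, M ≤ n → k ≤ (D ∩ y ∩ E n).ncard) ∧
        (∀ k : ℕ, ∃ M : ℕ, ∀ n ∈ N, M ≤ n → k ≤ ((D \ y) ∩ E n).ncard) := by
  classical
  intro T
  induction T using Finset.strongInduction with
  | _ T IH =>
  intro hTC g hg G hGsub hGcol v hv hva hvb
  by_cases hTe : T = ∅
  · subst hTe
    have hvS : v ∈ S := by
      rcases hv with h | ⟨_, h⟩
      · exact h
      · exact absurd h.symm (Finset.nonempty_iff_ne_empty.mp hCne)
    refine ⟨Set.range g, Set.infinite_range_of_injective hg.injective, v, hvS, fun D hD => ⟨?_, ?_⟩⟩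
    · intro k
      refine ⟨g k, ?_⟩
      rintro n ⟨j, rfl⟩ hj
      have hjk : k ≤ j := (hg.le_iff_le).mp hj
      have h1 := hva D hD (Finset.notMem_empty D) j
      calc k ≤ j := hjk
        _ ≤ (v ∩ D ∩ E (g j)).ncard := h1
        _ = (D ∩ v ∩ E (g j)).ncard := by rw [Set.inter_comm v D]
    · intro k
      refine ⟨g k, ?_⟩
      rintro n ⟨j, rfl⟩ hj
      have hjk : k ≤ j := (hg.le_iff_le).mp hj
      have hsub : D ∩ G j ⊆ (D \ v) ∩ E (g j) := by
        intro z hz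
        exact ⟨⟨hz.1, fun hzv => Set.disjoint_left.mp (hvb j) hzv hz.2⟩, hGsub j hz.2⟩
      calc k ≤ j + 1 := by omega
        _ ≤ (D ∩ G j).ncard := hGcol D hD j
        _ ≤ ((D \ v) ∩ E (g j)).ncard :=
            Set.ncard_le_ncard hsub ((hE.1 (g j)).inter_of_right _)
  · obtain ⟨C₀, hC₀T⟩ := Finset.nonempty_iff_ne_empty.mpr hTe
    have hC₀C : C₀ ∈ C := hTC hC₀T
    have hGspread : IsSpread G := spread_refine E hE C hCne g hg G hGsub hGcol
    have hGref : Refines G E := ⟨hGspread, g, hg.injective, hGsub⟩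
    have hGcolour : IsColouring C G :=
      ⟨hC.1, hC.2.1, fun D hD k => ⟨k, fun n hn => le_trans (by omega) (hGcol D hD n)⟩⟩
    obtain ⟨x, hxS, hx⟩ := hkey G hGref hGcolour C₀ hC₀C
    have key2 : ∀ B m : ℕ, ∃ n, m < n ∧ B < (x ∩ C₀ ∩ G n).ncard ∧
        ∀ D ∈ C, B < (xᶜ ∩ D ∩ G n).ncard := by
      intro B m
      obtain ⟨n, hn1, hn2⟩ :=
        hx (max B ((Finset.range (m+1)).sup fun t => (x ∩ C₀ ∩ G t).ncard))
      refine ⟨n, ?_, lt_of_le_of_lt (le_max_left _ _) hn1,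
        fun D hD => lt_of_le_of_lt (le_max_left _ _) (hn2 D hD)⟩
      by_contra h
      push_neg at h
      have hmem : n ∈ Finset.range (m+1) := Finset.mem_range.mpr (by omega)
      have h2 : (x ∩ C₀ ∩ G n).ncard ≤ (Finset.range (m+1)).sup
          (fun t => (x ∩ C₀ ∩ G t).ncard) :=
        Finset.le_sup (f := fun t => (x ∩ C₀ ∩ G t).ncard) hmem
      exact absurd hn1 (not_lt.mpr (le_trans h2 (le_max_right _ _)))
    choose nf hnf using key2
    let f : ℕ → ℕ := fun j =>
      Nat.rec (motive := fun _ => ℕ) (nf 0 0) (fun i ih => nf (i+1) ih) j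
    have hmono : StrictMono f :=
      strictMono_nat_of_lt_succ (fun j => (hnf (j+1) (f j)).1)
    have hfgood1 : ∀ j, j < (x ∩ C₀ ∩ G (f j)).ncard := by
      intro j
      cases j with
      | zero => exact (hnf 0 0).2.1
      | succ i => exact (hnf (i+1) (f i)).2.1
    have hfgood2 : ∀ j, ∀ D ∈ C, j < (xᶜ ∩ D ∩ G (f j)).ncard := by
      intro j
      cases j with
      | zero => exact (hnf 0 0).2.2
      | succ i => exact (hnf (i+1) (f i)).2.2
    have hv'S : v ∪ x ∈ S := by
      rcases hv with h | ⟨he, _⟩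
      · exact hUC v h x hxS
      · rw [he, Set.empty_union]; exact hxS
    refine IH (T.erase C₀) (Finset.erase_ssubset hC₀T)
      ((Finset.erase_subset _ _).trans hTC)
      (g ∘ f) (hg.comp hmono) (fun j => xᶜ ∩ G (f j))
      (fun j => Set.inter_subset_right.trans (hGsub (f j)))
      ?_ (v ∪ x) (Or.inl hv'S) ?_ ?_
    · intro D hD j
      have h1 := hfgood2 j D hD
      have hset : D ∩ (xᶜ ∩ G (f j)) = xᶜ ∩ D ∩ G (f j) := by
        rw [← Set.inter_assoc, Set.inter_comm D xᶜ]
      rw [hset]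
      omega
    · intro D hD hDe j
      by_cases hDC₀ : D = C₀
      · subst hDC₀
        have h1 := hfgood1 j
        have hsub : x ∩ D ∩ G (f j) ⊆ (v ∪ x) ∩ D ∩ E (g (f j)) :=
          Set.inter_subset_inter
            (Set.inter_subset_inter Set.subset_union_right subset_rfl) (hGsub (f j))
        have h2 : (x ∩ D ∩ G (f j)).ncard ≤ ((v ∪ x) ∩ D ∩ E (g (f j))).ncard :=
          Set.ncard_le_ncard hsub ((hE.1 (g (f j))).inter_of_right _)
        have h3 : j ≤ f j := hmono.le_apply
        simp only [Function.comp_apply]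
        omega
      · have hDT : D ∉ T := fun h => hDe (Finset.mem_erase.mpr ⟨hDC₀, h⟩)
        have h1 := hva D hD hDT (f j)
        have hsub : v ∩ D ∩ E (g (f j)) ⊆ (v ∪ x) ∩ D ∩ E (g (f j)) :=
          Set.inter_subset_inter
            (Set.inter_subset_inter Set.subset_union_left subset_rfl) subset_rfl
        have h2 : (v ∩ D ∩ E (g (f j))).ncard ≤ ((v ∪ x) ∩ D ∩ E (g (f j))).ncard :=
          Set.ncard_le_ncard hsub ((hE.1 (g (f j))).inter_of_right _)
        have h3 : j ≤ f j := hmono.le_apply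
        simp only [Function.comp_apply]
        omega
    · intro j
      refine Set.disjoint_union_left.mpr ⟨?_, ?_⟩
      · exact (hvb (f j)).mono_right Set.inter_subset_right
      · exact (disjoint_compl_right).mono_right Set.inter_subset_left

end Aux

/-- Lemma 4.6 (Dichotomy Lemma): either some member of `S` halves every colour
class along a subsequence of the spread, or the colouring is `S`-decisive for
some refinement of the spread. -/
theorem dichotomy_lemma {Ω : Type*} (S : Set (Set Ω))
    (hUC : ∀ a ∈ S, ∀ b ∈ S, a ∪ b ∈ S)
    (E : ℕ → Set Ω) (hE : IsSpread E)
    (C : Finset (Set Ω)) (hC : IsColouring C E) :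
    (∃ N : Set ℕ, N.Infinite ∧ ∃ y ∈ S, ∀ D ∈ C,
        (∀ k : ℕ, ∃ M : ℕ, ∀ n ∈ N, M ≤ n → k ≤ (D ∩ y ∩ E n).ncard) ∧
        (∀ k : ℕ, ∃ M : ℕ, ∀ n ∈ N, M ≤ n → k ≤ ((D \ y) ∩ E n).ncard)) ∨
    (∃ F : ℕ → Set Ω, Refines F E ∧ IsColouring C F ∧
        ∃ C₀, IsDecisiveClass S C C₀ F) := by
  by_cases hii : ∃ F : ℕ → Set Ω, Refines F E ∧ IsColouring C F ∧
      ∃ C₀, IsDecisiveClass S C C₀ F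
  · exact Or.inr hii
  push_neg at hii
  have hCne : C.Nonempty := by
    obtain ⟨w, hw⟩ := hE.2.1 0
    have hwu : w ∈ ⋃₀ (C : Set (Set Ω)) := by rw [hC.1]; exact Set.mem_univ w
    obtain ⟨D, hD, _⟩ := hwu
    exact ⟨D, hD⟩
  have hkey : ∀ F : ℕ → Set Ω, Refines F E → IsColouring C F → ∀ C₀ ∈ C,
      ∃ x ∈ S, ∀ B : ℕ, ∃ n, B < (x ∩ C₀ ∩ F n).ncard ∧
        ∀ D ∈ C, B < (xᶜ ∩ D ∩ F n).ncard := by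
    intro F hF hCF C₀ hC₀
    have h := hii F hF hCF C₀
    unfold IsDecisiveClass at h
    push_neg at h
    exact h hC₀
  left
  have hA : ∀ k : ℕ, ∃ N, ∀ n ≥ N, ∀ D ∈ C, k ≤ (D ∩ E n).ncard := by
    intro k
    have h4 : ∀ D ∈ C, ∃ N, ∀ n ≥ N, k ≤ (D ∩ E n).ncard := fun D hD => hC.2.2 D hD k
    choose! Nf hNf using h4
    exact ⟨C.sup Nf, fun n hn D hD => hNf D hD n (le_trans (Finset.le_sup hD) hn)⟩
  choose NN hNN using hA
  let m : ℕ → ℕ := fun j =>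
    Nat.rec (motive := fun _ => ℕ) (NN 1) (fun i ih => max (ih + 1) (NN (i + 2))) j
  have hms : ∀ j, m (j+1) = max (m j + 1) (NN (j+2)) := fun _ => rfl
  have hm1 : ∀ j, NN (j+1) ≤ m j := by
    intro j
    cases j with
    | zero => exact le_of_eq rfl
    | succ i => rw [hms]; exact le_max_right _ _
  have hm2 : StrictMono m := strictMono_nat_of_lt_succ (fun j => by
    rw [hms]; exact lt_of_lt_of_le (Nat.lt_succ_self _) (le_max_left _ _))
  have hGcol : ∀ D ∈ C, ∀ j : ℕ, j + 1 ≤ (D ∩ E (m j)).ncard :=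
    fun D hD j => hNN (j+1) (m j) (hm1 j) D hD
  exact dichotomy_aux S hUC E hE C hC hCne hkey C subset_rfl m hm2
    (fun j => E (m j)) (fun j => subset_rfl) hGcol ∅ (Or.inr ⟨rfl, rfl⟩)
    (fun D hD hDT j => absurd hD hDT) (fun j => Set.empty_disjoint _)
end

section
/- (Shattering/decisive dichotomy) Let S ⊆ P(Ω) be a union-closed set system and E a spread in Ω. Then either (S): there is a spread G refining E and a sequence (a_i)_{i≥1} in S which shatters G, or (D): there is a spread F refining E and an S-decisive colouring of F. -/
/-- `(a j)` shatters the spread `G`. -/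
def Shatters {Ω : Type*} (a : ℕ → Set Ω) (G : ℕ → Set Ω) : Prop :=
  ∀ (m : ℕ) (y : Fin m → Set Ω), (∀ j, y j = a j ∨ y j = (a j)ᶜ) →
    ∀ k : ℕ, ∃ N : ℕ, ∀ n ≥ N, k ≤ (G n ∩ ⋂ j, y j).ncard

/-!
Suppose no refinement of `E` carries an `S`-decisive colouring. Given a refinement `F` of `E` with a
colouring `C`, the classes of `C` can be split one at a time: outside the union `z` of the sets
chosen so far, `C` still colours (a tail of) `F`, and as this colouring is not decisive at a class
`D`, some `x ∈ S` meets `D` in large sets while every class keeps large parts outside `x`; then `z`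
is replaced by `z ∪ x ∈ S` and `F` by a subsequence. Applied to the colouring by the atoms of
`a 0, …, a (i - 1)`, this yields `a i ∈ S` and a refinement on which all atoms of level `i + 1`
are large. Taking from the `k`-th refinement one term containing at least `k` points of each atom
of level `k`, with strictly increasing indices in `E`, gives a refinement shattered by `(a i)`.
-/

open Filter Function Set

lemma exists_strictMono_tendsto_atTop_of_forall_exists_lt {v : ℕ → ℕ}
    (h : ∀ B, ∃ n, B < v n) : ∃ ψ : ℕ → ℕ, StrictMono ψ ∧ Tendsto (v ∘ ψ) atTop atTop := by
  have hfreq : ∀ B, ∃ᶠ n in atTop, B < v n := by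
    intro B
    refine frequently_atTop.2 fun N => ?_
    obtain ⟨n, hn⟩ := h (max B ((Finset.range N).sup v))
    refine ⟨n, le_of_not_gt fun hnN => ?_, (le_max_left _ _).trans_lt hn⟩
    have := Finset.le_sup (f := v) (Finset.mem_range.2 hnN)
    omega
  obtain ⟨ψ, hψ, hv⟩ := extraction_forall_of_frequently hfreq
  exact ⟨ψ, hψ, tendsto_atTop_mono (fun B => (hv B).le) tendsto_id⟩

lemma exists_strictMono_apply_of_forall_exists_lt {g : ℕ → ℕ → ℕ} {Q : ℕ → ℕ → Prop}
    (h : ∀ k M, ∃ n, M < g k n ∧ Q k n) :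
    ∃ n : ℕ → ℕ, StrictMono (fun k => g k (n k)) ∧ ∀ k, Q k (n k) := by
  choose pick hlt hQ using h
  -- `s (k + 1) = g k (n k)` is the previous value that the next choice has to exceed
  let s : ℕ → ℕ := fun k => Nat.rec 0 (fun k sk => g k (pick k sk)) k
  exact ⟨fun k => pick k (s k), strictMono_nat_of_lt_succ fun k => hlt (k + 1) (s (k + 1)),
    fun k => hQ k (s k)⟩

lemma exists_seq_of_forall_update {α β : Type*} (Q : α → Prop) (P : (ℕ → α) → ℕ → β → Prop)
    (hP : ∀ a a' i b, (∀ j < i, a j = a' j) → P a i b → P a' i b)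
    (a₀ : ℕ → α) (b₀ : β) (h₀ : P a₀ 0 b₀)
    (hstep : ∀ a i b, P a i b → ∃ x, Q x ∧ ∃ b', P (update a i x) (i + 1) b') :
    ∃ a : ℕ → α, (∀ j, Q (a j)) ∧ ∀ i, ∃ b, P a i b := by
  have htotal : ∀ a i b, ∃ x b', P a i b → Q x ∧ P (update a i x) (i + 1) b' := by
    intro a i b
    by_cases h : P a i b
    · obtain ⟨x, hx, b', hb'⟩ := hstep a i b h
      exact ⟨x, b', fun _ => ⟨hx, hb'⟩⟩
    · exact ⟨a₀ 0, b₀, fun h' => absurd h' h⟩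
  choose x b' hxb using htotal
  let stage : ℕ → (ℕ → α) × β := fun i =>
    Nat.rec (a₀, b₀) (fun i st => (update st.1 i (x st.1 i st.2), b' st.1 i st.2)) i
  have hstage : ∀ i, P (stage i).1 i (stage i).2 := by
    intro i
    induction i with
    | zero => exact h₀
    | succ i ih => exact (hxb _ _ _ ih).2
  let a : ℕ → α := fun j => (stage (j + 1)).1 j
  have hcoh : ∀ i, ∀ j < i, (stage i).1 j = a j := by
    intro i
    induction i with
    | zero => intro j hj; omega
    | succ i ih =>
      intro j hj
      rcases Nat.lt_succ_iff_lt_or_eq.1 hj with hj | rfl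
      · exact (update_of_ne hj.ne _ _).trans (ih j hj)
      · rfl
  refine ⟨a, fun j => ?_, fun i => ⟨(stage i).2, hP _ _ _ _ (hcoh i) (hstage i)⟩⟩
  have := (hxb _ _ _ (hstage j)).1
  simpa [a, stage] using this

section

variable {Ω : Type*} {S : Set (Set Ω)} {E F G : ℕ → Set Ω}

def IsLargeOn (s : Set Ω) (F : ℕ → Set Ω) : Prop :=
  Tendsto (fun n => (s ∩ F n).ncard) atTop atTop

def HasDecisiveColouring (S : Set (Set Ω)) (E : ℕ → Set Ω) : Prop :=
  ∃ F : ℕ → Set Ω, Refines F E ∧ ∃ C : Finset (Set Ω), IsColouring C F ∧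
    ∃ C₀, IsDecisiveClass S C C₀ F

lemma IsLargeOn.comp {s : Set Ω} (h : IsLargeOn s F) {φ : ℕ → ℕ} (hφ : StrictMono φ) :
    IsLargeOn s (F ∘ φ) :=
  Tendsto.comp (g := fun n => (s ∩ F n).ncard) h hφ.tendsto_atTop

lemma IsLargeOn.mono {s t : Set Ω} (h : IsLargeOn s F) (hst : ∀ n, s ∩ F n ⊆ t ∩ G n)
    (hG : ∀ n, (G n).Finite) : IsLargeOn t G :=
  tendsto_atTop_mono (fun n => ncard_le_ncard (hst n) ((hG n).inter_of_right t)) h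

lemma IsSpread.tendsto_ncard (hE : IsSpread E) : Tendsto (fun n => (E n).ncard) atTop atTop :=
  tendsto_atTop_atTop.2 hE.2.2.2

lemma IsColouring.isLargeOn {C : Finset (Set Ω)} (hC : IsColouring C F) {D : Set Ω}
    (hD : D ∈ C) : IsLargeOn D F :=
  tendsto_atTop_atTop.2 (hC.2.2 D hD)

lemma IsColouring.of_isLargeOn {C : Finset (Set Ω)} (hC : IsColouring C F)
    (hG : ∀ D ∈ C, IsLargeOn D G) : IsColouring C G :=
  ⟨hC.1, hC.2.1, fun D hD => tendsto_atTop_atTop.1 (hG D hD)⟩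

lemma IsSpread.of_subset (hF : IsSpread F) {φ : ℕ → ℕ} (hφ : Injective φ)
    (hGF : ∀ n, G n ⊆ F (φ n)) (hne : ∀ n, (G n).Nonempty)
    (hG : Tendsto (fun n => (G n).ncard) atTop atTop) : IsSpread G :=
  ⟨fun n => (hF.1 _).subset (hGF n), hne,
    fun m n hmn => (hF.2.2.1 _ _ (hφ.ne hmn)).mono (hGF m) (hGF n), tendsto_atTop_atTop.1 hG⟩

lemma Refines.of_subset (hF : Refines F E) {φ : ℕ → ℕ} (hφ : Injective φ)
    (hGF : ∀ n, G n ⊆ F (φ n)) (hne : ∀ n, (G n).Nonempty)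
    (hG : Tendsto (fun n => (G n).ncard) atTop atTop) : Refines G E := by
  obtain ⟨hF, g, hg, hFE⟩ := hF
  exact ⟨hF.of_subset hφ hGF hne hG, g ∘ φ, hg.comp hφ, fun n => (hGF n).trans (hFE _)⟩

lemma Refines.comp (hF : Refines F E) {φ : ℕ → ℕ} (hφ : StrictMono φ) : Refines (F ∘ φ) E :=
  hF.of_subset hφ.injective (fun _ => subset_rfl) (fun _ => hF.1.2.1 _)
    (hF.1.tendsto_ncard.comp hφ.tendsto_atTop)

lemma Refines.exists_inter (hF : Refines F E) {s : Set Ω} (h : IsLargeOn s F) :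
    ∃ φ : ℕ → ℕ, StrictMono φ ∧ Refines (fun n => s ∩ F (φ n)) E := by
  obtain ⟨N, hN⟩ := (tendsto_atTop.1 h 1).exists_forall_of_atTop
  refine ⟨(· + N), strictMono_id.add_const N, hF.of_subset (add_left_injective N)
    (fun _ => inter_subset_right) (fun n => ?_) (h.comp (strictMono_id.add_const N))⟩
  exact nonempty_of_ncard_ne_zero (Nat.one_le_iff_ne_zero.1 (hN (n + N) le_add_self))

lemma exists_split_of_not_isDecisiveClass {C : Finset (Set Ω)} {C₀ : Set Ω} (hC₀ : C₀ ∈ C)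
    (h : ¬ IsDecisiveClass S C C₀ G) :
    ∃ x ∈ S, ∃ ψ : ℕ → ℕ, StrictMono ψ ∧ IsLargeOn (x ∩ C₀) (G ∘ ψ) ∧
      ∀ D ∈ C, IsLargeOn (xᶜ ∩ D) (G ∘ ψ) := by
  simp only [IsDecisiveClass, hC₀, true_and] at h
  push Not at h
  obtain ⟨x, hxS, hx⟩ := h
  let v : ℕ → ℕ := fun n =>
    min (x ∩ C₀ ∩ G n).ncard (C.inf' ⟨C₀, hC₀⟩ fun D => (xᶜ ∩ D ∩ G n).ncard)
  obtain ⟨ψ, hψ, hv⟩ := exists_strictMono_tendsto_atTop_of_forall_exists_lt (v := v) fun B => by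
    obtain ⟨n, h₀, hD⟩ := hx B
    exact ⟨n, lt_min h₀ ((Finset.lt_inf'_iff _).2 hD)⟩
  exact ⟨x, hxS, ψ, hψ, tendsto_atTop_mono (fun n => min_le_left _ _) hv,
    fun D hD => tendsto_atTop_mono (fun n => (min_le_right _ _).trans (Finset.inf'_le _ hD)) hv⟩

/-- Outside `z` the classes of `C` colour a refinement of `E`; as this colouring is not decisive,
its class `D₀` is split by some `x ∈ S`. -/
lemma exists_split_compl {C : Finset (Set Ω)} (hD : ¬ HasDecisiveColouring S E)
    (hC : IsColouring C F) {z : Set Ω} {F' : ℕ → Set Ω} (hF' : Refines F' E)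
    (hz : ∀ D ∈ C, IsLargeOn (zᶜ ∩ D) F') {D₀ : Set Ω} (hD₀ : D₀ ∈ C) :
    ∃ x ∈ S, ∃ φ : ℕ → ℕ, StrictMono φ ∧ IsLargeOn ((z ∪ x) ∩ D₀) (F' ∘ φ) ∧
      ∀ D ∈ C, IsLargeOn ((z ∪ x)ᶜ ∩ D) (F' ∘ φ) := by
  have hF'fin : ∀ n, (F' n).Finite := hF'.1.1
  obtain ⟨φ, hφ, hG⟩ := hF'.exists_inter (s := zᶜ)
    ((hz D₀ hD₀).mono (fun n => inter_subset_inter_left _ inter_subset_left) hF'fin)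
  have hCG : IsColouring C (fun n => zᶜ ∩ F' (φ n)) := hC.of_isLargeOn fun D hD =>
    ((hz D hD).comp hφ).mono (fun n ω hω => ⟨hω.1.2, hω.1.1, hω.2⟩)
      fun n => (hF'fin _).inter_of_right _
  obtain ⟨x, hxS, ψ, hψ, hx₀, hxc⟩ :=
    exists_split_of_not_isDecisiveClass hD₀ fun h => hD ⟨_, hG, C, hCG, D₀, h⟩
  refine ⟨x, hxS, φ ∘ ψ, hφ.comp hψ, hx₀.mono (fun n ω hω => ⟨⟨Or.inr hω.1.1, hω.1.2⟩, hω.2.2⟩)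
    fun n => hF'fin _, fun D hD => (hxc D hD).mono ?_ fun n => hF'fin _⟩
  rintro n ω ⟨⟨hx, hωD⟩, hz, hF⟩
  exact ⟨⟨fun h => h.elim hz hx, hωD⟩, hF⟩

lemma exists_mem_isLargeOn_inter_and_compl (hUC : ∀ a ∈ S, ∀ b ∈ S, a ∪ b ∈ S)
    (hD : ¬ HasDecisiveColouring S E) {C : Finset (Set Ω)} (hF : Refines F E)
    (hC : IsColouring C F) :
    ∃ x ∈ S, ∃ F' : ℕ → Set Ω, Refines F' E ∧
      ∀ D ∈ C, IsLargeOn (x ∩ D) F' ∧ IsLargeOn (xᶜ ∩ D) F' := by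
  classical
  obtain ⟨z, hz, F', hF', hzC, hzc⟩ : ∃ z, (z = ∅ ∨ z ∈ S) ∧ ∃ F' : ℕ → Set Ω, Refines F' E ∧
      (∀ D ∈ C, IsLargeOn (z ∩ D) F') ∧ ∀ D ∈ C, IsLargeOn (zᶜ ∩ D) F' := by
    refine Finset.induction_on' (motive := fun T => ∃ z, (z = ∅ ∨ z ∈ S) ∧ ∃ F' : ℕ → Set Ω,
      Refines F' E ∧ (∀ D ∈ T, IsLargeOn (z ∩ D) F') ∧ ∀ D ∈ C, IsLargeOn (zᶜ ∩ D) F') C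
      ⟨∅, Or.inl rfl, F, hF, by simp, fun D hD => by simpa using hC.isLargeOn hD⟩ ?_
    rintro D₀ T hD₀ - - ⟨z, hz, F', hF', hzT, hzc⟩
    obtain ⟨x, hxS, φ, hφ, hx₀, hxc⟩ := exists_split_compl hD hC hF' hzc hD₀
    refine ⟨z ∪ x, Or.inr ?_, F' ∘ φ, hF'.comp hφ,
      (Finset.forall_mem_insert _ _ _).2 ⟨hx₀, ?_⟩, hxc⟩
    · rcases hz with rfl | hz
      · rwa [empty_union]
      · exact hUC z hz x hxS
    · exact fun D hD => ((hzT D hD).comp hφ).mono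
        (fun n => inter_subset_inter_left _ (inter_subset_inter_left _ subset_union_left))
        fun n => hF'.1.1 _
  refine ⟨z, hz.resolve_left ?_, F', hF', fun D hD => ⟨hzC D hD, hzc D hD⟩⟩
  rintro rfl
  obtain ⟨ω, -⟩ := hF.1.2.1 0
  obtain ⟨D, hD, -⟩ := mem_sUnion.1 (hC.1 ▸ mem_univ ω)
  exact not_tendsto_const_atTop 0 _ (by simpa [IsLargeOn] using hzC D hD)

def cell (a : ℕ → Set Ω) (i : ℕ) (p : Fin i → Bool) : Set Ω :=
  {ω | ∀ j : Fin i, ω ∈ a j ↔ p j = true}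

lemma cell_zero (a : ℕ → Set Ω) (p : Fin 0 → Bool) : cell a 0 p = univ :=
  eq_univ_of_forall fun _ => finZeroElim

lemma cell_congr {a a' : ℕ → Set Ω} {i : ℕ} (h : ∀ j < i, a j = a' j) (p : Fin i → Bool) :
    cell a i p = cell a' i p := by
  simp only [cell, h _ (Fin.is_lt _)]

lemma cell_update_succ (a : ℕ → Set Ω) (i : ℕ) (x : Set Ω) (q : Fin (i + 1) → Bool) :
    cell (update a i x) (i + 1) q =
      (if q (Fin.last i) then x else xᶜ) ∩ cell a i (fun j => q j.castSucc) := by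
  ext ω
  cases hq : q (Fin.last i) <;>
    simp [cell, Fin.forall_fin_succ', hq, update_of_ne (Fin.is_lt _).ne, and_comm]

lemma isColouring_image_cell {a : ℕ → Set Ω} {i : ℕ} (h : ∀ p, IsLargeOn (cell a i p) F) :
    IsColouring (Finset.univ.image (cell a i)) F := by
  classical
  refine ⟨eq_univ_of_forall fun ω => ?_, ?_, ?_⟩
  · exact mem_sUnion.2 ⟨cell a i fun j => decide (ω ∈ a j), by simp, fun j => by simp⟩
  · simp only [Finset.mem_image, Finset.mem_univ, true_and]
    rintro _ ⟨p, rfl⟩ _ ⟨q, rfl⟩ hpq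
    refine Set.disjoint_left.2 fun ω hp hq => hpq (congrArg _ (funext fun j => ?_))
    exact Bool.eq_iff_iff.2 ((hp j).symm.trans (hq j))
  · simp only [Finset.mem_image, Finset.mem_univ, true_and, forall_exists_index]
    rintro _ p rfl
    exact tendsto_atTop_atTop.1 (h p)

lemma exists_mem_isLargeOn_cell_update (hUC : ∀ a ∈ S, ∀ b ∈ S, a ∪ b ∈ S)
    (hD : ¬ HasDecisiveColouring S E) (hF : Refines F E) {a : ℕ → Set Ω} {i : ℕ}
    (h : ∀ p, IsLargeOn (cell a i p) F) :
    ∃ x ∈ S, ∃ F' : ℕ → Set Ω, Refines F' E ∧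
      ∀ q, IsLargeOn (cell (update a i x) (i + 1) q) F' := by
  classical
  obtain ⟨x, hxS, F', hF', hx⟩ :=
    exists_mem_isLargeOn_inter_and_compl hUC hD hF (isColouring_image_cell h)
  refine ⟨x, hxS, F', hF', fun q => ?_⟩
  have hcell := hx _ (Finset.mem_image_of_mem _ (Finset.mem_univ fun j => q j.castSucc))
  rw [cell_update_succ]
  split_ifs
  exacts [hcell.1, hcell.2]

lemma exists_cell_subset_iInter {a : ℕ → Set Ω} {m n : ℕ} {y : Fin m → Set Ω}
    (hy : ∀ j, y j = a j ∨ y j = (a j)ᶜ) (hmn : m ≤ n) :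
    ∃ p : Fin n → Bool, cell a n p ⊆ ⋂ j, y j := by
  classical
  refine ⟨fun j => if h : (j : ℕ) < m then decide (y ⟨j, h⟩ = a j) else true, fun ω hω => ?_⟩
  refine mem_iInter.2 fun j => ?_
  have hj := hω ⟨j, j.is_lt.trans_le hmn⟩
  simp only [Fin.is_lt, dif_pos, decide_eq_true_eq] at hj
  by_cases ha : y j = a j
  · exact ha ▸ hj.2 ha
  · exact (hy j).resolve_left ha ▸ fun hω => ha (hj.1 hω)

lemma IsSpread.exists_refines_forall {F : ℕ → ℕ → Set Ω} (hE : IsSpread E)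
    (hF : ∀ k, Refines (F k) E) {Q : ℕ → Set Ω → Prop} (hQ : ∀ k, ∀ᶠ n in atTop, Q k (F k n)) :
    ∃ G : ℕ → Set Ω, Refines G E ∧ ∀ k, Q k (G k) := by
  choose g hg hFE using fun k => (hF k).2
  have hpick : ∀ k M, ∃ n, M < g k n ∧ k ≤ (F k n).ncard ∧ Q k (F k n) := fun k M =>
    (((hg k).nat_tendsto_atTop.eventually_gt_atTop M).and
      (((hF k).1.tendsto_ncard.eventually_ge_atTop k).and (hQ k))).exists
  obtain ⟨n, hn, hQn⟩ := exists_strictMono_apply_of_forall_exists_lt hpick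
  refine ⟨fun k => F k (n k), ⟨hE.of_subset hn.injective (fun k => hFE k _)
    (fun k => (hF k).1.2.1 _) (tendsto_atTop_mono (fun k => (hQn k).1) tendsto_id),
    fun k => g k (n k), hn.injective, fun k => hFE k _⟩, fun k => (hQn k).2⟩

lemma shatters_of_forall_le_ncard {a G : ℕ → Set Ω} (hG : ∀ k, (G k).Finite)
    (h : ∀ k (p : Fin k → Bool), k ≤ (cell a k p ∩ G k).ncard) : Shatters a G := by
  intro m y hy k
  refine ⟨max m k, fun n hn => ?_⟩
  obtain ⟨p, hp⟩ := exists_cell_subset_iInter hy (le_of_max_le_left hn)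
  calc k ≤ n := le_of_max_le_right hn
    _ ≤ (cell a n p ∩ G n).ncard := h n p
    _ ≤ (G n ∩ ⋂ j, y j).ncard :=
      ncard_le_ncard (fun ω hω => ⟨hω.2, hp hω.1⟩) ((hG n).inter_of_left _)

end

/-- Theorem 4.4 (shattering/decisive dichotomy). -/
theorem shattering_decisive_dichotomy {Ω : Type*} (S : Set (Set Ω))
    (hUC : ∀ a ∈ S, ∀ b ∈ S, a ∪ b ∈ S)
    (E : ℕ → Set Ω) (hE : IsSpread E) :
    (∃ G : ℕ → Set Ω, Refines G E ∧ ∃ a : ℕ → Set Ω, (∀ i, a i ∈ S) ∧ Shatters a G) ∨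
    (∃ F : ℕ → Set Ω, Refines F E ∧ ∃ C : Finset (Set Ω), IsColouring C F ∧
        ∃ C₀, IsDecisiveClass S C C₀ F) := by
  by_cases hD : HasDecisiveColouring S E
  · exact Or.inr hD
  obtain ⟨a, haS, ha⟩ := exists_seq_of_forall_update (· ∈ S)
    (fun a i F => Refines F E ∧ ∀ p, IsLargeOn (cell a i p) F)
    (fun a a' i F h ⟨hF, hcell⟩ => ⟨hF, fun p => cell_congr h p ▸ hcell p⟩) (fun _ => ∅) E
    ⟨⟨hE, id, injective_id, fun _ => subset_rfl⟩, fun p => by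
      simpa [cell_zero, IsLargeOn] using hE.tendsto_ncard⟩
    fun a i F ⟨hF, hcell⟩ => exists_mem_isLargeOn_cell_update hUC hD hF hcell
  choose F hF hcell using ha
  obtain ⟨G, hG, hGa⟩ := hE.exists_refines_forall hF
    (Q := fun k s => ∀ p : Fin k → Bool, k ≤ (cell a k p ∩ s).ncard)
    fun k => eventually_all.2 fun p => (hcell k p).eventually_ge_atTop k
  exact Or.inl ⟨G, hG, a, haS, shatters_of_forall_le_ncard hG.1.1 hGa⟩
end

section
/- Let Ω = {0,1,2} × ℕ, x_j = {(1,j),(2,j)}, a_n = {(0,k),(1,k) : n² ≤ k < (n+1)²}, and let S be the union-closed set system generated by the a_n's and x_j's in P(Ω). Then every member of S has a unique decomposition, up to ordering, as a union of members of {a_n} and members of {x_j}; in particular, if a finite union of a_n's and x_j's equals another such finite union, then the two index sets of a's coincide and the two index sets of x's coincide. -/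
/-- The "tile" `x_j = {(1,j),(2,j)}` in `Ω = {0,1,2} × ℕ`. -/
def xset (j : ℕ) : Set (Fin 3 × ℕ) := {(1, j), (2, j)}

/-- The "tile" `a_n = {(0,k),(1,k) : n² ≤ k < (n+1)²}`. -/
def aset (n : ℕ) : Set (Fin 3 × ℕ) :=
  {p | (p.1 = 0 ∨ p.1 = 1) ∧ n ^ 2 ≤ p.2 ∧ p.2 < (n + 1) ^ 2}

/-- Membership in the union-closed set system generated by the `a_n` and `x_j`. -/
inductive MemS : Set (Fin 3 × ℕ) → Prop
  | a (n : ℕ) : MemS (aset n)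
  | x (j : ℕ) : MemS (xset j)
  | union {s t : Set (Fin 3 × ℕ)} : MemS s → MemS t → MemS (s ∪ t)

/-- Every member of `S` is a finite union of `a`'s and `x`'s, and this
decomposition is unique (as index sets). -/
theorem unique_factorization :
    (∀ s : Set (Fin 3 × ℕ), MemS s → ∃ A X : Finset ℕ, (A.Nonempty ∨ X.Nonempty) ∧
        s = (⋃ n ∈ A, aset n) ∪ ⋃ j ∈ X, xset j) ∧
    (∀ A A' X X' : Finset ℕ,
        (⋃ n ∈ A, aset n) ∪ (⋃ j ∈ X, xset j)
          = (⋃ n ∈ A', aset n) ∪ ⋃ j ∈ X', xset j →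
        A = A' ∧ X = X') := by
  have key0 : ∀ (A X : Finset ℕ) (n : ℕ),
      ((0 : Fin 3), n ^ 2) ∈ (⋃ m ∈ A, aset m) ∪ (⋃ j ∈ X, xset j) ↔ n ∈ A := by
    intro A X n
    constructor
    · rintro (h | h)
      · rw [Set.mem_iUnion₂] at h
        obtain ⟨m, hm, -, h1, h2⟩ := h
        have : m = n := by nlinarith
        rwa [this] at hm
      · exfalso
        rw [Set.mem_iUnion₂] at h
        obtain ⟨j, -, hmem⟩ := h
        rcases hmem with h | h
        · exact (by decide : (0 : Fin 3) ≠ 1) (congrArg Prod.fst h)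
        · exact (by decide : (0 : Fin 3) ≠ 2) (congrArg Prod.fst h)
    · intro h
      exact Or.inl (Set.mem_biUnion h
        ⟨Or.inl rfl, le_refl _, Nat.pow_lt_pow_left (Nat.lt_succ_self n) two_ne_zero⟩)
  have key2 : ∀ (A X : Finset ℕ) (j : ℕ),
      ((2 : Fin 3), j) ∈ (⋃ m ∈ A, aset m) ∪ (⋃ i ∈ X, xset i) ↔ j ∈ X := by
    intro A X j
    constructor
    · rintro (h | h)
      · exfalso
        rw [Set.mem_iUnion₂] at h
        obtain ⟨m, -, (hfst | hfst), -⟩ := h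
        · exact (by decide : (2 : Fin 3) ≠ 0) hfst
        · exact (by decide : (2 : Fin 3) ≠ 1) hfst
      · rw [Set.mem_iUnion₂] at h
        obtain ⟨i, hi, hmem⟩ := h
        rcases hmem with h | h
        · exact absurd (congrArg Prod.fst h) (by decide : (2 : Fin 3) ≠ 1)
        · have : j = i := congrArg Prod.snd h
          rwa [this]
    · intro h
      exact Or.inr (Set.mem_biUnion h (Or.inr rfl))
  constructor
  · intro s hs
    induction hs with
    | a n =>
        refine ⟨{n}, ∅, Or.inl ⟨n, Finset.mem_singleton_self n⟩, ?_⟩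
        simp
    | x j =>
        refine ⟨∅, {j}, Or.inr ⟨j, Finset.mem_singleton_self j⟩, ?_⟩
        simp
    | union hs ht ihs iht =>
        obtain ⟨A, X, hne, rfl⟩ := ihs
        obtain ⟨A', X', -, rfl⟩ := iht
        refine ⟨A ∪ A', X ∪ X', ?_, ?_⟩
        · rcases hne with h | h
          · exact Or.inl (h.mono Finset.subset_union_left)
          · exact Or.inr (h.mono Finset.subset_union_left)
        · rw [Finset.set_biUnion_union, Finset.set_biUnion_union,
            Set.union_union_union_comm]
  · intro A A' X X' h
    constructor
    · ext n
      rw [← key0 A X n, h, key0]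
    · ext j
      rw [← key2 A X j, h, key2]
end
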